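/- arXiv:1610.01281 — 2 statements merged into one kernel-verified Lean document; each statement's English description precedes it below -/
import Mathlib

section
/- Let X be the random variable taking value -√(p/(1-p)) with probability 1-p and √((1-p)/p) with probability p, for fixed p ∈ (0,1). Then for all real t with |t| < √(p(1-p))·π, we have |E[e^{itX}]| ≤ 1 - 2t²/π². -/
/-!
Writing `a = √(p/(1-p))` and `b = √((1-p)/p)`, the characteristic function factors as
`e^{-ita} ((1-p) + p e^{is})` with `s = t(a+b) = t/√(p(1-p))`, so `|s| < π`. Since
`|(1-p) + p e^{is}|² = 1 - 2p(1-p)(1 - cos s)`, the bound `cos s ≤ 1 - 2s²/π²` on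
`[-π, π]` gives `|φ(t)|² ≤ 1 - 4t²/π² ≤ (1 - 2t²/π²)²`.
-/

open Complex Real

lemma norm_one_sub_add_mul_exp_sq (p s : ℝ) :
    ‖(1 - p : ℂ) + p * exp (s * I)‖ ^ 2 = 1 - 2 * p * (1 - p) * (1 - Real.cos s) := by
  have hre : (1 - p : ℂ) + p * exp (s * I) =
      ((1 - p + p * Real.cos s : ℝ) : ℂ) + ((p * Real.sin s : ℝ) : ℂ) * I := by
    rw [exp_mul_I]
    push_cast [← ofReal_cos, ← ofReal_sin]
    ring
  rw [hre, Complex.sq_norm, normSq_add_mul_I]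
  linear_combination p ^ 2 * Real.sin_sq_add_cos_sq s

lemma le_one_sub_of_sq_le_one_sub_two_mul {x y : ℝ} (hx : 0 ≤ x) (h : x ^ 2 ≤ 1 - 2 * y) :
    x ≤ 1 - y := by
  nlinarith [sq_nonneg y]

lemma norm_one_sub_add_mul_exp_le {p s : ℝ} (hp₀ : 0 ≤ p) (hp₁ : p ≤ 1) (hs : |s| ≤ π) :
    ‖(1 - p : ℂ) + p * exp (s * I)‖ ≤ 1 - 2 * (p * (1 - p) * s ^ 2) / π ^ 2 := by
  refine le_one_sub_of_sq_le_one_sub_two_mul (norm_nonneg _) ?_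
  have hcos : 2 / π ^ 2 * s ^ 2 ≤ 1 - Real.cos s := by
    linarith [Real.cos_le_one_sub_mul_cos_sq hs]
  have hvar : 0 ≤ p * (1 - p) := mul_nonneg hp₀ (by linarith)
  rw [norm_one_sub_add_mul_exp_sq]
  linear_combination 2 * mul_le_mul_of_nonneg_left hcos hvar

lemma norm_two_point_charFun (p t a b : ℝ) :
    ‖(1 - p : ℂ) * exp (I * t * -a) + p * exp (I * t * b)‖ =
      ‖(1 - p : ℂ) + p * exp ((t * (a + b) : ℝ) * I)‖ := by
  have hfac : (1 - p : ℂ) * exp (I * t * -a) + p * exp (I * t * b) =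
      exp ((-(t * a) : ℝ) * I) * ((1 - p : ℂ) + p * exp ((t * (a + b) : ℝ) * I)) := by
    rw [mul_add, mul_left_comm _ (p : ℂ), ← Complex.exp_add]
    push_cast
    ring_nf
  rw [hfac, norm_mul, norm_exp_ofReal_mul_I, one_mul]

lemma sqrt_div_one_sub_add_sqrt_one_sub_div {p : ℝ} (hp₀ : 0 < p) (hp₁ : p < 1) :
    √(p / (1 - p)) + √((1 - p) / p) = (√(p * (1 - p)))⁻¹ := by
  have hq₀ : 0 < 1 - p := by linarith
  have hp := Real.sq_sqrt hp₀.le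
  have hq := Real.sq_sqrt hq₀.le
  rw [Real.sqrt_div' _ hq₀.le, Real.sqrt_div' _ hp₀.le, Real.sqrt_mul hp₀.le]
  field_simp
  linear_combination hp + hq

/-- Characteristic function bound for the standardized Bernoulli(p) random variable:
for |t| < √(p(1-p))·π, |E[e^{itX}]| ≤ 1 - 2t²/π². -/
theorem stmt0 (p : ℝ) (hp : p ∈ Set.Ioo (0:ℝ) 1) (t : ℝ)
    (ht : |t| < Real.sqrt (p * (1 - p)) * Real.pi) :
    ‖(1 - p : ℂ) * Complex.exp (Complex.I * (t : ℂ) * (-(Real.sqrt (p / (1 - p)) : ℝ) : ℂ)) +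
      (p : ℂ) * Complex.exp (Complex.I * (t : ℂ) * ((Real.sqrt ((1 - p) / p) : ℝ) : ℂ))‖ ≤
    1 - 2 * t ^ 2 / Real.pi ^ 2 := by
  obtain ⟨hp₀, hp₁⟩ := hp
  have hvar : 0 < p * (1 - p) := mul_pos hp₀ (by linarith)
  have hσ : 0 < √(p * (1 - p)) := Real.sqrt_pos.2 hvar
  rw [norm_two_point_charFun, sqrt_div_one_sub_add_sqrt_one_sub_div hp₀ hp₁]
  have hs : |t * (√(p * (1 - p)))⁻¹| ≤ π := by
    rw [abs_mul, abs_inv, abs_of_pos hσ, ← div_eq_mul_inv, div_le_iff₀ hσ]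
    linarith
  have hts : p * (1 - p) * (t * (√(p * (1 - p)))⁻¹) ^ 2 = t ^ 2 := by
    rw [mul_pow, inv_pow, Real.sq_sqrt hvar.le]
    field_simp
  simpa only [hts] using norm_one_sub_add_mul_exp_le hp₀.le hp₁.le hs
end

section
/- Let X₁, ..., X_m be i.i.d. copies of the standardized Bernoulli(p) variable (taking −√(p/(1−p)) w.p. 1−p and √((1−p)/p) w.p. p), and let X = Q·Σᵢ Xᵢ with Q = 1/√m. Then for |t| < √(p(1−p))·π·√m, |E[e^{itX}]| ≤ exp(−2t²/π²). -/
set_option maxHeartbeats 1000000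


/-- The Bernoulli(p) product weight of a point of {0,1}^ι. -/
noncomputable def pWeight (p : ℝ) {ι : Type*} [Fintype ι] (x : ι → Bool) : ℝ :=
  ∏ i, if x i then p else 1 - p

/-- The value of the standardized Bernoulli(p) random variable. -/
noncomputable def stdBer (p : ℝ) (b : Bool) : ℝ :=
  if b then Real.sqrt ((1 - p) / p) else -Real.sqrt (p / (1 - p))

lemma sum_prod_pow (m : ℕ) (g : Bool → ℂ) :
    ∑ x : Fin m → Bool, ∏ i, g (x i) = (∑ b : Bool, g b) ^ m := by
  have := Finset.prod_univ_sum (fun _ : Fin m => (Finset.univ : Finset Bool)) (fun _ b => g b)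
  simp only [Fintype.piFinset_univ] at this
  rw [← this, Finset.prod_const, Finset.card_univ, Fintype.card_fin]

/-- Quadratic upper bound for cos on [-π, π]. -/
lemma cos_upper (θ : ℝ) (h : |θ| ≤ Real.pi) :
    Real.cos θ ≤ 1 - 2 * θ ^ 2 / Real.pi ^ 2 := by
  have hpi := Real.pi_pos
  wlog h0 : 0 ≤ θ generalizing θ
  · have := this (-θ) (by rwa [abs_neg]) (by linarith [le_of_not_ge h0])
    simpa [Real.cos_neg] using this
  rw [abs_of_nonneg h0] at h
  have hsin : θ / Real.pi ≤ Real.sin (θ / 2) := by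
    have := Real.mul_le_sin (x := θ / 2) (by linarith) (by linarith)
    calc θ / Real.pi = 2 / Real.pi * (θ / 2) := by ring
    _ ≤ Real.sin (θ / 2) := this
  have hc : Real.cos θ = 1 - 2 * Real.sin (θ / 2) ^ 2 := by
    have h1 := Real.cos_two_mul (θ / 2)
    have h2 := Real.sin_sq_add_cos_sq (θ / 2)
    have h3 : 2 * (θ / 2) = θ := by ring
    rw [h3] at h1
    nlinarith
  have hθπ : 0 ≤ θ / Real.pi := div_nonneg h0 hpi.le
  have hsq : (θ / Real.pi) ^ 2 ≤ Real.sin (θ / 2) ^ 2 :=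
    pow_le_pow_left₀ hθπ hsin 2
  rw [div_pow] at hsq
  rw [hc]
  have h4 : 2 * θ ^ 2 / Real.pi ^ 2 = 2 * (θ ^ 2 / Real.pi ^ 2) := by ring
  rw [h4]
  linarith

/-- Expression of a weighted exponential in re/im form. -/
lemma exp_form (w c s : ℝ) :
    (w : ℂ) * Complex.exp (Complex.I * (s : ℂ) * (c : ℂ)) =
      ((w * Real.cos (s * c) : ℝ) : ℂ) + ((w * Real.sin (s * c) : ℝ) : ℂ) * Complex.I := by
  have h : Complex.I * (s : ℂ) * (c : ℂ) = ((s * c : ℝ) : ℂ) * Complex.I := by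
    push_cast; ring
  rw [h, Complex.exp_mul_I, ← Complex.ofReal_cos, ← Complex.ofReal_sin]
  push_cast
  ring

/-- The single-variable characteristic-function bound. -/
lemma single_bound (p s : ℝ) (hp0 : 0 < p) (hp1 : p < 1)
    (hs : |s| < Real.sqrt (p * (1 - p)) * Real.pi) :
    ‖∑ b : Bool, ((if b then p else 1 - p : ℝ) : ℂ) *
        Complex.exp (Complex.I * (s : ℂ) * ((stdBer p b : ℝ) : ℂ))‖ ≤
      1 - 2 * s ^ 2 / Real.pi ^ 2 := by
  have hpi := Real.pi_pos
  have h1p : (0:ℝ) < 1 - p := by linarith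
  have hq : (0:ℝ) < p * (1 - p) := by positivity
  have hsq0 : (0:ℝ) < Real.sqrt (p * (1 - p)) := Real.sqrt_pos.mpr hq
  set a := Real.sqrt (p / (1 - p)) with ha
  set b := Real.sqrt ((1 - p) / p) with hb
  have hsp : Real.sqrt p > 0 := Real.sqrt_pos.mpr hp0
  have hs1p : Real.sqrt (1 - p) > 0 := Real.sqrt_pos.mpr h1p
  have hab : a + b = 1 / Real.sqrt (p * (1 - p)) := by
    rw [ha, hb, Real.sqrt_div hp0.le, Real.sqrt_div h1p.le, Real.sqrt_mul hp0.le]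
    field_simp
    nlinarith [Real.sq_sqrt hp0.le, Real.sq_sqrt h1p.le]
  -- rewrite the characteristic function in re/im form
  have key : (∑ x : Bool, ((if x then p else 1 - p : ℝ) : ℂ) *
        Complex.exp (Complex.I * (s : ℂ) * ((stdBer p x : ℝ) : ℂ)))
      = ((p * Real.cos (s * b) + (1 - p) * Real.cos (s * a) : ℝ) : ℂ) +
        ((p * Real.sin (s * b) - (1 - p) * Real.sin (s * a) : ℝ) : ℂ) * Complex.I := by
    rw [Fintype.sum_bool]
    have e1 : stdBer p true = b := by simp [stdBer, hb]
    have e2 : stdBer p false = -a := by simp [stdBer, ha]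
    rw [e1, e2, if_pos rfl, if_neg (by simp)]
    rw [exp_form p b s, exp_form (1 - p) (-a) s]
    rw [mul_neg, Real.cos_neg, Real.sin_neg]
    push_cast
    ring
  rw [key, Complex.norm_def, Complex.normSq_add_mul_I]
  -- the squared norm equals 1 - 2p(1-p)(1 - cos θ)
  have hca : Real.cos (s * (a + b)) = Real.cos (s * b) * Real.cos (s * a)
      - Real.sin (s * b) * Real.sin (s * a) := by
    have h3 : s * (a + b) = s * b + s * a := by ring
    rw [h3, Real.cos_add]
  have hns : (p * Real.cos (s * b) + (1 - p) * Real.cos (s * a)) ^ 2 +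
      (p * Real.sin (s * b) - (1 - p) * Real.sin (s * a)) ^ 2 =
      p ^ 2 + (1 - p) ^ 2 + 2 * p * (1 - p) * Real.cos (s * (a + b)) := by
    rw [hca]
    nlinarith [Real.sin_sq_add_cos_sq (s * a), Real.sin_sq_add_cos_sq (s * b),
      Real.sin_sq_add_cos_sq (s * (a + b))]
  rw [hns]
  set θ := s * (a + b) with hθ
  have hθ2 : θ ^ 2 = s ^ 2 / (p * (1 - p)) := by
    rw [hθ, hab, mul_pow, div_pow, one_pow, Real.sq_sqrt hq.le]
    ring
  have hθπ : |θ| ≤ Real.pi := by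
    have habs : |θ| = |s| / Real.sqrt (p * (1 - p)) := by
      rw [hθ, hab, abs_mul, abs_of_pos (by positivity : (0:ℝ) < 1 / Real.sqrt (p * (1 - p)))]
      field_simp
    rw [habs, div_le_iff₀ hsq0]
    nlinarith [hs]
  have hcos := cos_upper θ hθπ
  have hs2 : s ^ 2 < p * (1 - p) * Real.pi ^ 2 := by
    have h2 : |s| ^ 2 < (Real.sqrt (p * (1 - p)) * Real.pi) ^ 2 :=
      pow_lt_pow_left₀ hs (abs_nonneg s) two_ne_zero
    rw [sq_abs, mul_pow, Real.sq_sqrt hq.le] at h2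
    exact h2
  have hq4 : p * (1 - p) ≤ 1 / 4 := by nlinarith [sq_nonneg (p - 1 / 2)]
  have hπ2 : (0:ℝ) < Real.pi ^ 2 := by positivity
  have hu : 2 * s ^ 2 / Real.pi ^ 2 < 1 / 2 := by
    rw [div_lt_iff₀ hπ2]
    nlinarith
  have hb2 : p ^ 2 + (1 - p) ^ 2 + 2 * p * (1 - p) * Real.cos θ ≤
      (1 - 2 * s ^ 2 / Real.pi ^ 2) ^ 2 := by
    have h3 : 2 * θ ^ 2 / Real.pi ^ 2 = 2 * s ^ 2 / (p * (1 - p)) / Real.pi ^ 2 := by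
      rw [hθ2]; ring
    have hcos' : Real.cos θ ≤ 1 - 2 * s ^ 2 / (p * (1 - p)) / Real.pi ^ 2 := by
      rw [← h3]; exact hcos
    have key2 : p ^ 2 + (1 - p) ^ 2 + 2 * p * (1 - p) *
        (1 - 2 * s ^ 2 / (p * (1 - p)) / Real.pi ^ 2) = 1 - 4 * s ^ 2 / Real.pi ^ 2 := by
      field_simp
      ring
    have h5 : 2 * p * (1 - p) * Real.cos θ ≤
        2 * p * (1 - p) * (1 - 2 * s ^ 2 / (p * (1 - p)) / Real.pi ^ 2) :=
      mul_le_mul_of_nonneg_left hcos' (by positivity)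
    have h6 : p ^ 2 + (1 - p) ^ 2 + 2 * p * (1 - p) * Real.cos θ ≤
        1 - 4 * s ^ 2 / Real.pi ^ 2 := by linarith [h5, key2]
    set q := s ^ 2 / Real.pi ^ 2 with hqq
    have h7 : 4 * s ^ 2 / Real.pi ^ 2 = 4 * q := by rw [hqq]; ring
    have h8 : 2 * s ^ 2 / Real.pi ^ 2 = 2 * q := by rw [hqq]; ring
    rw [h8]; rw [h7] at h6
    nlinarith [sq_nonneg q]
  calc Real.sqrt (p ^ 2 + (1 - p) ^ 2 + 2 * p * (1 - p) * Real.cos θ)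
      ≤ Real.sqrt ((1 - 2 * s ^ 2 / Real.pi ^ 2) ^ 2) := Real.sqrt_le_sqrt hb2
    _ = |1 - 2 * s ^ 2 / Real.pi ^ 2| := Real.sqrt_sq_eq_abs _
    _ = 1 - 2 * s ^ 2 / Real.pi ^ 2 := abs_of_pos (by linarith)

/-- For X the normalized sum of m i.i.d. standardized Bernoulli(p) variables and
|t| < √(p(1-p))·π·√m, we have |E[e^{itX}]| ≤ exp(-2t²/π²). -/
theorem stmt18 (p : ℝ) (hp : p ∈ Set.Ioo (0:ℝ) 1) (m : ℕ) (hm : 1 ≤ m) (t : ℝ)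
    (ht : |t| < Real.sqrt (p * (1 - p)) * Real.pi * Real.sqrt m) :
    ‖∑ x : Fin m → Bool, ((pWeight p x : ℝ) : ℂ) *
        Complex.exp (Complex.I * (t : ℂ) *
          (((1 / Real.sqrt m) * ∑ i, stdBer p (x i) : ℝ) : ℂ))‖ ≤
      Real.exp (-2 * t ^ 2 / Real.pi ^ 2) := by
  obtain ⟨hp0, hp1⟩ := hp
  have hpi := Real.pi_pos
  have hm0 : (0:ℝ) < m := by exact_mod_cast Nat.lt_of_lt_of_le Nat.zero_lt_one hm
  have hsm : (0:ℝ) < Real.sqrt m := Real.sqrt_pos.mpr hm0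
  have hsmC : ((Real.sqrt m : ℝ) : ℂ) ≠ 0 := by exact_mod_cast hsm.ne'
  set s := t / Real.sqrt m with hsdef
  have hs : |s| < Real.sqrt (p * (1 - p)) * Real.pi := by
    rw [hsdef, abs_div, abs_of_pos hsm, div_lt_iff₀ hsm]
    exact ht
  have hsummand : ∀ x : Fin m → Bool,
      ((pWeight p x : ℝ) : ℂ) * Complex.exp (Complex.I * (t : ℂ) *
          (((1 / Real.sqrt m) * ∑ i, stdBer p (x i) : ℝ) : ℂ))
      = ∏ i : Fin m, (((if x i then p else 1 - p : ℝ)) : ℂ) *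
          Complex.exp (Complex.I * (s : ℂ) * ((stdBer p (x i) : ℝ) : ℂ)) := by
    intro x
    have hexp : Complex.I * (t : ℂ) *
          (((1 / Real.sqrt m) * ∑ i, stdBer p (x i) : ℝ) : ℂ)
        = ∑ i : Fin m, Complex.I * (s : ℂ) * ((stdBer p (x i) : ℝ) : ℂ) := by
      push_cast
      rw [Finset.mul_sum, Finset.mul_sum]
      apply Finset.sum_congr rfl
      intro i _
      rw [hsdef]
      push_cast
      ring
    have h1 : ((pWeight p x : ℝ) : ℂ)
        = ∏ i : Fin m, (((if x i then p else 1 - p : ℝ)) : ℂ) := by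
      rw [pWeight, Complex.ofReal_prod]
    have h2 : Complex.exp (Complex.I * (t : ℂ) *
          (((1 / Real.sqrt m) * ∑ i, stdBer p (x i) : ℝ) : ℂ))
        = ∏ i : Fin m, Complex.exp (Complex.I * (s : ℂ) * ((stdBer p (x i) : ℝ) : ℂ)) := by
      rw [hexp, Complex.exp_sum]
    rw [h1, h2, ← Finset.prod_mul_distrib]
  simp_rw [hsummand]
  rw [show (∑ x : Fin m → Bool, ∏ i : Fin m,
        (((if x i then p else 1 - p : ℝ)) : ℂ) *
          Complex.exp (Complex.I * (s : ℂ) * ((stdBer p (x i) : ℝ) : ℂ)))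
      = (∑ b : Bool, (((if b then p else 1 - p : ℝ)) : ℂ) *
          Complex.exp (Complex.I * (s : ℂ) * ((stdBer p b : ℝ) : ℂ))) ^ m from
    sum_prod_pow m (fun b => (((if b then p else 1 - p : ℝ)) : ℂ) *
      Complex.exp (Complex.I * (s : ℂ) * ((stdBer p b : ℝ) : ℂ)))]
  rw [norm_pow]
  have h1 := single_bound p s hp0 hp1 hs
  have hnn : (0:ℝ) ≤ ‖∑ b : Bool, ((if b then p else 1 - p : ℝ) : ℂ) *
      Complex.exp (Complex.I * (s : ℂ) * ((stdBer p b : ℝ) : ℂ))‖ := norm_nonneg _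
  have h2 : (1 - 2 * s ^ 2 / Real.pi ^ 2) ≤ Real.exp (-(2 * s ^ 2 / Real.pi ^ 2)) := by
    have := Real.add_one_le_exp (-(2 * s ^ 2 / Real.pi ^ 2))
    linarith
  have h3 : ‖∑ b : Bool, ((if b then p else 1 - p : ℝ) : ℂ) *
      Complex.exp (Complex.I * (s : ℂ) * ((stdBer p b : ℝ) : ℂ))‖ ^ m ≤
      Real.exp (-(2 * s ^ 2 / Real.pi ^ 2)) ^ m :=
    pow_le_pow_left₀ hnn (le_trans h1 h2) m
  refine le_trans h3 ?_
  rw [← Real.exp_nat_mul]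
  apply le_of_eq
  congr 1
  have hs2 : s ^ 2 = t ^ 2 / m := by
    rw [hsdef, div_pow, Real.sq_sqrt hm0.le]
  rw [hs2]
  field_simp
end
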